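/- Let d : [0,1] → ℝ be piecewise Lipschitz: there exist points 0 = π_0 < π_1 < … < π_L < π_{L+1} = 1 such that the restriction of d to [π_l, π_{l+1}) is Lipschitz for l = 0,…,L−1 and the restriction of d to [π_L, 1] is Lipschitz. For integers 2 ≤ B < T and 2 ≤ t ≤ T write Δd_t = d(t/T) − d((t−1)/T). Then there exists a constant M < ∞, depending only on d, such that for all integers 2 ≤ B < T and all integers 1 ≤ s ≤ B: Σ_{r=1}^{B} | Σ_{j=1}^{T−B} Δd_{r+j} Δd_{s+j} | ≤ M. -/

import Mathlib

/-!
A piecewise Lipschitz function has bounded variation `V` on `[0, 1]`: each Lipschitz piece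
contributes a finite variation and each breakpoint a single jump. Hence every run of consecutive
grid increments `Δd_t` has absolute sum at most `V`, whatever `T`. Bounding
`|Σ_j Δd_{r+j} Δd_{s+j}|` by `Σ_j |Δd_{r+j}| |Δd_{s+j}|` and summing over `r` first gives the
bound `V²`.
-/

open Filter Finset

noncomputable section

/-- A function `d : ℝ → ℝ` is piecewise Lipschitz on `[0,1]`: there are breakpoints
`0 = π 0 < π 1 < … < π L < π (L+1) = 1` such that `d` is Lipschitz on each `[π l, π (l+1))`
for `l < L` and on `[π L, 1]`. -/
def PiecewiseLipschitz (d : ℝ → ℝ) : Prop :=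
  ∃ (L : ℕ) (π : ℕ → ℝ), π 0 = 0 ∧ π (L + 1) = 1 ∧
    (∀ l, l ≤ L → π l < π (l + 1)) ∧
    (∀ l, l < L → ∃ C : NNReal, LipschitzOnWith C d (Set.Ico (π l) (π (l + 1)))) ∧
    (∃ C : NNReal, LipschitzOnWith C d (Set.Icc (π L) 1))

open Topology

theorem LipschitzOnWith.boundedVariationOn_Icc_of_Ico {f : ℝ → ℝ} {C : NNReal} {a b : ℝ}
    (hf : LipschitzOnWith C f (Set.Ico a b)) : BoundedVariationOn f (Set.Icc a b) := by
  rcases le_or_gt b a with hba | hab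
  · exact BoundedVariationOn.of_subsingleton (Set.subsingleton_Icc_of_ge hba)
  obtain ⟨g, hg, hfg⟩ := hf.extend_real
  have hIco : Set.Icc a b ∩ Set.Iio b = Set.Ico a b := by
    ext x; simp only [Set.mem_inter_iff, Set.mem_Icc, Set.mem_Iio, Set.mem_Ico]; grind
  have hlim : Tendsto f (𝓝[Set.Ico a b] b) (𝓝 (g b)) :=
    hg.continuous.continuousWithinAt.tendsto.congr' hfg.symm.eventuallyEq_nhdsWithin
  -- `f` may jump at `b`; the jump adds the single term `edist (f b) (g b)`.
  have hsplit := eVariationOn.eVariationOn_on_inter_Iic_eq_Iio_add_edist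
    (hIco ▸ right_nhdsWithin_Ico_neBot hab) (Set.right_mem_Icc.2 hab.le) (hIco ▸ hlim)
  rw [Set.inter_eq_left.2 Set.Icc_subset_Iic_self, hIco] at hsplit
  rw [BoundedVariationOn, hsplit, eVariationOn.eq_of_eqOn hfg]
  refine ENNReal.add_ne_top.2 ⟨?_, edist_ne_top _ _⟩
  exact ne_top_of_le_ne_top (hg.locallyBoundedVariationOn Set.univ a b trivial trivial)
    (eVariationOn.mono g (by simpa using Set.Ico_subset_Icc_self))

theorem PiecewiseLipschitz.boundedVariationOn {d : ℝ → ℝ} (hd : PiecewiseLipschitz d) :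
    BoundedVariationOn d (Set.Icc 0 1) := by
  obtain ⟨L, π, h0, h1, hlt, hLip, hLast⟩ := hd
  -- `π` is clamped at `L + 1` to get a monotone sequence, as `eVariationOn.sum'` requires.
  set I : ℕ → ℝ := fun k => π (min k (L + 1))
  have hI : Monotone I := monotone_nat_of_le_succ fun k => by
    rcases lt_or_ge k (L + 1) with hk | hk
    · simpa [I, min_eq_left hk.le, min_eq_left (Nat.succ_le_of_lt hk)] using (hlt k (by omega)).le
    · simp [I, min_eq_right hk, min_eq_right (hk.trans k.le_succ)]
  have hpiece : ∀ k < L + 1, BoundedVariationOn d (Set.Icc (I k) (I (k + 1))) := by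
    intro k hk
    simp only [I, min_eq_left hk.le, min_eq_left (Nat.succ_le_of_lt hk)]
    rcases lt_or_eq_of_le (Nat.lt_succ_iff.1 hk) with hk | rfl
    · obtain ⟨C, hC⟩ := hLip k hk
      exact hC.boundedVariationOn_Icc_of_Ico
    · obtain ⟨C, hC⟩ := hLast
      exact (hC.mono (h1 ▸ Set.Ico_subset_Icc_self)).boundedVariationOn_Icc_of_Ico
  have hsum := eVariationOn.sum' d hI (n := L + 1)
  simp only [I, min_self, Nat.zero_le, min_eq_left, h0, h1] at hsum
  rw [BoundedVariationOn, ← hsum]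
  exact ENNReal.sum_ne_top.2 fun k hk => hpiece k (Finset.mem_range.1 hk)

-- Written with the truncated `t - 1 : ℕ`, so that it is the statement's `Δd_t` definitionally.
def gridIncrement (f : ℝ → ℝ) (T t : ℕ) : ℝ :=
  f ((t : ℝ) / T) - f (((t - 1 : ℕ) : ℝ) / T)

theorem BoundedVariationOn.sum_abs_gridIncrement_le {f : ℝ → ℝ}
    (hf : BoundedVariationOn f (Set.Icc 0 1)) {T m n c : ℕ} (hT : n + c ≤ T) :
    ∑ r ∈ Finset.Icc m n, |gridIncrement f T (r + c)| ≤
      (eVariationOn f (Set.Icc 0 1)).toReal := by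
  set u : ℕ → ℝ := fun i => ((i + c - 1 : ℕ) : ℝ) / T
  have hu : Monotone u := fun i j hij => by
    simp only [u]; gcongr
  have hmem : ∀ i ∈ Set.Icc m (n + 1), u i ∈ Set.Icc (0 : ℝ) 1 := fun i hi =>
    ⟨by positivity, div_le_one_of_le₀ (by have := hi.2; norm_cast; omega) T.cast_nonneg⟩
  have hterm : ∀ i,
      edist (f (u (i + 1))) (f (u i)) = ENNReal.ofReal |gridIncrement f T (i + c)| := by
    intro i
    simp [u, gridIncrement, edist_dist, Real.dist_eq, show i + 1 + c - 1 = i + c by omega]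
  have key := eVariationOn.sum_le_of_monotoneOn_Icc (f := f) (hu.monotoneOn _) hmem
  simp only [hterm, Finset.Ico_add_one_right_eq_Icc] at key
  rwa [← ENNReal.ofReal_sum_of_nonneg (fun _ _ => abs_nonneg _),
    ENNReal.ofReal_le_iff_le_toReal hf] at key

theorem sum_abs_sum_mul_le {ι κ : Type*} (A : Finset ι) (J : Finset κ) (x : ι → κ → ℝ)
    (y : κ → ℝ) {K : ℝ} (hx : ∀ j ∈ J, ∑ r ∈ A, |x r j| ≤ K) :
    ∑ r ∈ A, |∑ j ∈ J, x r j * y j| ≤ K * ∑ j ∈ J, |y j| :=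
  calc ∑ r ∈ A, |∑ j ∈ J, x r j * y j|
      ≤ ∑ r ∈ A, ∑ j ∈ J, |x r j| * |y j| := by
        gcongr with r
        simpa only [abs_mul] using Finset.abs_sum_le_sum_abs (fun j => x r j * y j) J
    _ = ∑ j ∈ J, (∑ r ∈ A, |x r j|) * |y j| := by
        rw [Finset.sum_comm]; simp only [Finset.sum_mul]
    _ ≤ ∑ j ∈ J, K * |y j| := by
        gcongr with j hj; exact hx j hj
    _ = K * ∑ j ∈ J, |y j| := (Finset.mul_sum _ _ _).symm

/-- deterministic auxiliary bound: for a piecewise Lipschitz trend `d` there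
is a constant `M` with `Σ_{r=1}^B |Σ_{j=1}^{T-B} Δd_{r+j} Δd_{s+j}| ≤ M` for all
`2 ≤ B < T` and `1 ≤ s ≤ B`. -/
theorem statement15 (d : ℝ → ℝ) (hd : PiecewiseLipschitz d) :
    ∃ M : ℝ, ∀ B T : ℕ, 2 ≤ B → B < T → ∀ s : ℕ, 1 ≤ s → s ≤ B →
      ∑ r ∈ Finset.Icc 1 B,
          |∑ j ∈ Finset.Icc 1 (T - B),
            (d (((r + j : ℕ) : ℝ) / (T : ℝ)) - d (((r + j - 1 : ℕ) : ℝ) / (T : ℝ))) *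
              (d (((s + j : ℕ) : ℝ) / (T : ℝ)) - d (((s + j - 1 : ℕ) : ℝ) / (T : ℝ)))|
        ≤ M := by
  have hbv := hd.boundedVariationOn
  set K := (eVariationOn d (Set.Icc 0 1)).toReal
  refine ⟨K * K, fun B T _ hBT s _ hsB => ?_⟩
  have hrow : ∀ j ∈ Finset.Icc 1 (T - B),
      ∑ r ∈ Finset.Icc 1 B, |gridIncrement d T (r + j)| ≤ K :=
    fun j hj => hbv.sum_abs_gridIncrement_le (by have := (Finset.mem_Icc.1 hj).2; omega)
  have hcol : ∑ j ∈ Finset.Icc 1 (T - B), |gridIncrement d T (s + j)| ≤ K := by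
    simpa only [add_comm s] using hbv.sum_abs_gridIncrement_le (m := 1) (c := s) (by omega)
  exact (sum_abs_sum_mul_le _ _ _ (fun j => gridIncrement d T (s + j)) hrow).trans
    (mul_le_mul_of_nonneg_left hcol ENNReal.toReal_nonneg)
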